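/- arXiv:2407.03272 — 6 statements merged into one kernel-verified Lean document; each statement's English description precedes it below -/
import Mathlib

section
/- For the sequence defined by α₀ = 0 and α_{t+1} = (1 + √(1 + 4α_t²))/2, it holds that α_t ≥ (t+1)/2 for all t ≥ 1. -/
theorem alpha_lower_bound (α : ℕ → ℝ)
    (h0 : α 0 = 0)
    (hrec : ∀ t, α (t + 1) = (1 + Real.sqrt (1 + 4 * (α t) ^ 2)) / 2) :
    ∀ t : ℕ, 1 ≤ t → ((t : ℝ) + 1) / 2 ≤ α t := by
  intro t ht
  induction t with
  | zero => omega
  | succ n ih =>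
    rcases Nat.eq_zero_or_pos n with hn | hn
    · subst hn
      rw [hrec, h0]
      norm_num
    · have hih := ih hn
      have hpos : (0:ℝ) ≤ α n := by
        have : (0:ℝ) ≤ ((n:ℝ) + 1) / 2 := by positivity
        linarith
      have hsq : ((n:ℝ) + 1) ^ 2 ≤ 1 + 4 * (α n) ^ 2 := by
        have : ((n:ℝ) + 1) ^ 2 ≤ 4 * (α n) ^ 2 := by
          have h2 : (n:ℝ) + 1 ≤ 2 * α n := by linarith
          nlinarith
        linarith
      have hsqrt : (n:ℝ) + 1 ≤ Real.sqrt (1 + 4 * (α n) ^ 2) := by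
        
        calc (n:ℝ) + 1 = Real.sqrt (((n:ℝ)+1)^2) := by
              rw [Real.sqrt_sq (by positivity)]
          _ ≤ Real.sqrt (1 + 4 * (α n) ^ 2) := Real.sqrt_le_sqrt hsq
      rw [hrec]
      push_cast
      linarith
end

section
/- Let Q be a real symmetric positive semidefinite n×n matrix, b ∈ ℝⁿ, f(x) = ½⟨x, Qx⟩ − ⟨b, x⟩, and S a real symmetric positive semidefinite n×n matrix. Suppose x⁺ and y satisfy Qx⁺ − b + S(x⁺ − y) = 0. Then for every x ∈ ℝⁿ, f(x) − f(x⁺) ≥ ½⟨x⁺ − y, S(x⁺ − y)⟩ + ⟨y − x, S(x⁺ − y)⟩. -/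
/-!
Since `f` is convex quadratic, `f x - f x⁺ ≥ ⟨∇f(x⁺), x - x⁺⟩`, and the optimality condition
gives `∇f(x⁺) = Qx⁺ - b = -S(x⁺ - y)`. Splitting `x⁺ - x = (x⁺ - y) + (y - x)` yields the bound with
the full quadratic term `⟨x⁺ - y, S(x⁺ - y)⟩`, of which only half is claimed.
-/

open Matrix

namespace Matrix

variable {ι R : Type*} [Fintype ι] [CommRing R]

theorem IsSymm.dotProduct_mulVec_comm {Q : Matrix ι ι R} (hQ : Q.IsSymm) (u w : ι → R) :
    u ⬝ᵥ Q *ᵥ w = w ⬝ᵥ Q *ᵥ u := by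
  rw [← dotProduct_transpose_mulVec, hQ.eq]

theorem IsSymm.dotProduct_mulVec_self_sub_self {Q : Matrix ι ι R} (hQ : Q.IsSymm) (x z : ι → R) :
    x ⬝ᵥ Q *ᵥ x - z ⬝ᵥ Q *ᵥ z = 2 * ((x - z) ⬝ᵥ Q *ᵥ z) + (x - z) ⬝ᵥ Q *ᵥ (x - z) := by
  simp only [mulVec_sub, dotProduct_sub, sub_dotProduct]
  rw [hQ.dotProduct_mulVec_comm z x]
  ring

theorem PosSemidef.le_quadratic_sub_quadratic {Q : Matrix ι ι ℝ} (hQ : Q.PosSemidef)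
    (b x z : ι → ℝ) :
    (x - z) ⬝ᵥ (Q *ᵥ z - b) ≤
      ((1 / 2) * (x ⬝ᵥ Q *ᵥ x) - b ⬝ᵥ x) - ((1 / 2) * (z ⬝ᵥ Q *ᵥ z) - b ⬝ᵥ z) := by
  have hsymm : Q.IsSymm := isHermitian_iff_isSymm.mp hQ.1
  have hexpand := hsymm.dotProduct_mulVec_self_sub_self x z
  have hcurv : 0 ≤ (x - z) ⬝ᵥ Q *ᵥ (x - z) := by
    simpa using hQ.dotProduct_mulVec_nonneg (x - z)
  have hlin : (x - z) ⬝ᵥ (Q *ᵥ z - b) = (x - z) ⬝ᵥ Q *ᵥ z - (b ⬝ᵥ x - b ⬝ᵥ z) := by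
    rw [dotProduct_sub, dotProduct_comm (x - z) b, dotProduct_sub]
  linarith

end Matrix

theorem basic_descent_lemma {n : ℕ}
    (Q S : Matrix (Fin n) (Fin n) ℝ) (b : Fin n → ℝ)
    (hQ : Q.PosSemidef) (hS : S.PosSemidef)
    (f : (Fin n → ℝ) → ℝ)
    (hf : ∀ x, f x = (1 / 2) * (x ⬝ᵥ Q *ᵥ x) - b ⬝ᵥ x)
    (xplus y : Fin n → ℝ)
    (hopt : Q *ᵥ xplus - b + S *ᵥ (xplus - y) = 0) :
    ∀ x : Fin n → ℝ,
      (1 / 2) * ((xplus - y) ⬝ᵥ S *ᵥ (xplus - y)) + (y - x) ⬝ᵥ S *ᵥ (xplus - y)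
        ≤ f x - f xplus := by
  intro x
  have hgrad : Q *ᵥ xplus - b = -(S *ᵥ (xplus - y)) := eq_neg_of_add_eq_zero_left hopt
  have hdescent := hQ.le_quadratic_sub_quadratic b x xplus
  rw [hgrad] at hdescent
  have hsplit : (x - xplus) ⬝ᵥ -(S *ᵥ (xplus - y)) =
      (xplus - y) ⬝ᵥ S *ᵥ (xplus - y) + (y - x) ⬝ᵥ S *ᵥ (xplus - y) := by
    rw [dotProduct_neg, ← neg_dotProduct, ← add_dotProduct]
    congr 1
    abel
  have hprox : 0 ≤ (xplus - y) ⬝ᵥ S *ᵥ (xplus - y) := by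
    simpa using hS.dotProduct_mulVec_nonneg (xplus - y)
  rw [hf, hf]
  linarith
end

section
/- Let Q ∈ 𝕊₊ⁿ, b in the range of Q, S ∈ 𝕊₊ⁿ, and x* a solution of Qx = b. Consider the Nesterov iteration: x⁰ = y¹, α₀ = 0, α₁ = 1, and for t ≥ 1: Qxᵗ − b + S(xᵗ − yᵗ) = 0, α_{t+1} = (1+√(1+4α_t²))/2, y^{t+1} = (1 + (α_t−1)/α_{t+1})xᵗ − ((α_t−1)/α_{t+1})x^{t−1}. Define wᵗ = α_t xᵗ − (α_t − 1)x^{t−1} − x*. Then α_t²(f(xᵗ) − f(x*)) + ½⟨wᵗ, Swᵗ⟩ ≤ α_{t−1}²(f(x^{t−1}) − f(x*)) + ½⟨w^{t−1}, Sw^{t−1}⟩ for all t ≥ 1. -/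
/-!
The gradient of `f` at `xᵗ` is `S(yᵗ - xᵗ)`, so convexity gives
`f(xᵗ) + ⟨S(yᵗ - xᵗ), z - xᵗ⟩ ≤ f(z)` for every `z`. Applying this at `z = x^{t-1}` with weight
`α_t(α_t - 1) = α_{t-1}²` and at `z = x*` with weight `α_t`, and using that the momentum step makes
`w^{t-1} = wᵗ + α_t (yᵗ - xᵗ)`, the two sides differ by `½ α_t² ⟨yᵗ - xᵗ, S(yᵗ - xᵗ)⟩ ≥ 0`.
-/

open Matrix

namespace Matrix

variable {ι : Type*} [Fintype ι]

lemma IsSymm.dotProduct_mulVec_comm_s5 {R : Type*} [CommSemiring R] {M : Matrix ι ι R}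
    (hM : M.IsSymm) (u v : ι → R) : u ⬝ᵥ M *ᵥ v = v ⬝ᵥ M *ᵥ u := by
  rw [dotProduct_mulVec, ← mulVec_transpose, hM.eq, dotProduct_comm]

lemma IsSymm.dotProduct_mulVec_add_smul {R : Type*} [CommRing R] {M : Matrix ι ι R}
    (hM : M.IsSymm) (u v : ι → R) (c : R) :
    (u + c • v) ⬝ᵥ M *ᵥ (u + c • v)
      = u ⬝ᵥ M *ᵥ u + 2 * c * (M *ᵥ v ⬝ᵥ u) + c ^ 2 * (v ⬝ᵥ M *ᵥ v) := by
  simp only [mulVec_add, mulVec_smul, dotProduct_add, add_dotProduct, dotProduct_smul,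
    smul_dotProduct, smul_eq_mul]
  rw [dotProduct_comm (M *ᵥ v) u, hM.dotProduct_mulVec_comm_s5 u v]
  ring

lemma PosSemidef.quadratic_add_gradient_le {Q : Matrix ι ι ℝ} (hQ : Q.PosSemidef)
    (b x z : ι → ℝ) :
    1 / 2 * (x ⬝ᵥ Q *ᵥ x) - b ⬝ᵥ x + (Q *ᵥ x - b) ⬝ᵥ (z - x)
      ≤ 1 / 2 * (z ⬝ᵥ Q *ᵥ z) - b ⬝ᵥ z := by
  have hQs : Q.IsSymm := isHermitian_iff_isSymm.mp hQ.1
  have hexpand := hQs.dotProduct_mulVec_add_smul x (z - x) 1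
  have hnonneg : 0 ≤ (z - x) ⬝ᵥ Q *ᵥ (z - x) := by
    simpa using hQ.dotProduct_mulVec_nonneg (z - x)
  have hsymm : Q *ᵥ (z - x) ⬝ᵥ x = Q *ᵥ x ⬝ᵥ (z - x) := by
    rw [dotProduct_comm, hQs.dotProduct_mulVec_comm_s5, dotProduct_comm]
  rw [one_smul, add_sub_cancel] at hexpand
  rw [sub_dotProduct, dotProduct_sub b z x]
  linarith

end Matrix

lemma one_le_nesterov_step (a : ℝ) : 1 ≤ (1 + √(1 + 4 * a ^ 2)) / 2 := by
  have : 1 ≤ √(1 + 4 * a ^ 2) := Real.one_le_sqrt.mpr (le_add_of_nonneg_right (by positivity))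
  linarith

lemma nesterov_step_mul_sub_one (a : ℝ) :
    (1 + √(1 + 4 * a ^ 2)) / 2 * ((1 + √(1 + 4 * a ^ 2)) / 2 - 1) = a ^ 2 := by
  have := Real.sq_sqrt (show 0 ≤ 1 + 4 * a ^ 2 by positivity)
  linear_combination this / 4

lemma nesterov_weight_one_le_and_mul_sub_one {α : ℕ → ℝ} (hα0 : α 0 = 0) (hα1 : α 1 = 1)
    (hαrec : ∀ t, 1 ≤ t → α (t + 1) = (1 + √(1 + 4 * α t ^ 2)) / 2) {t : ℕ} (ht : 1 ≤ t) :
    1 ≤ α t ∧ α t * (α t - 1) = α (t - 1) ^ 2 := by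
  obtain ⟨_ | s, rfl⟩ := Nat.exists_eq_add_of_le' ht
  · simp [hα0, hα1]
  · rw [hαrec (s + 1) (by omega)]
    exact ⟨one_le_nesterov_step _, nesterov_step_mul_sub_one _⟩

lemma nesterov_lyapunov_step {ι : Type*} [Fintype ι] {f : (ι → ℝ) → ℝ} {S : Matrix ι ι ℝ}
    (hS : S.PosSemidef) {x d : ι → ℝ} (hx : ∀ z, f x + S *ᵥ d ⬝ᵥ (z - x) ≤ f z)
    {a : ℝ} (ha : 1 ≤ a) (x' z w : ι → ℝ) (hw : w = a • x - (a - 1) • x' - z) :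
    a ^ 2 * (f x - f z) + 1 / 2 * (w ⬝ᵥ S *ᵥ w)
      ≤ a * (a - 1) * (f x' - f z) + 1 / 2 * ((w + a • d) ⬝ᵥ S *ᵥ (w + a • d)) := by
  have hprev := mul_le_mul_of_nonneg_left (hx x') (by nlinarith : 0 ≤ a * (a - 1))
  have hstar := mul_le_mul_of_nonneg_left (hx z) (by linarith : 0 ≤ a)
  have hd : 0 ≤ a ^ 2 * (d ⬝ᵥ S *ᵥ d) :=
    mul_nonneg (sq_nonneg a) (by simpa using hS.dotProduct_mulVec_nonneg d)
  have hgw : S *ᵥ d ⬝ᵥ w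
      = a * (S *ᵥ d ⬝ᵥ x) - (a - 1) * (S *ᵥ d ⬝ᵥ x') - S *ᵥ d ⬝ᵥ z := by
    simp only [hw, dotProduct_sub, dotProduct_smul, smul_eq_mul]
  rw [(isHermitian_iff_isSymm.mp hS.1).dotProduct_mulVec_add_smul, hgw]
  simp only [dotProduct_sub] at hprev hstar
  linarith

lemma nesterov_w_pred_eq {ι : Type*} {x y w : ℕ → ι → ℝ} {α : ℕ → ℝ} {xstar : ι → ℝ}
    (hα0 : α 0 = 0) (hα1 : α 1 = 1) (hx0 : x 0 = y 1)
    (hy : ∀ t, 1 ≤ t →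
      y (t + 1) = (1 + (α t - 1) / α (t + 1)) • x t - ((α t - 1) / α (t + 1)) • x (t - 1))
    (hw : ∀ t, w t = α t • x t - (α t - 1) • x (t - 1) - xstar) {t : ℕ} (ht : 1 ≤ t)
    (hαt : α t ≠ 0) :
    w (t - 1) = w t + α t • (y t - x t) := by
  obtain ⟨_ | s, rfl⟩ := Nat.exists_eq_add_of_le' ht
  -- truncated subtraction gives `w 0 = x 0 - xstar`, and `x 0 = y 1`
  · simp only [hw, Nat.zero_add, Nat.sub_self, hα0, hα1, hx0]
    module
  · have hαy : α (s + 1 + 1) • y (s + 1 + 1)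
        = α (s + 1 + 1) • x (s + 1) + (α (s + 1) - 1) • (x (s + 1) - x s) := by
      rw [hy (s + 1) (by omega), smul_sub, smul_smul, smul_smul, mul_add, mul_one,
        mul_div_cancel₀ _ hαt, Nat.add_sub_cancel]
      module
    rw [hw, hw, smul_sub, hαy, Nat.add_sub_cancel, Nat.add_sub_cancel]
    module

theorem nesterov_recursive_descent_general {n : ℕ}
    (Q S : Matrix (Fin n) (Fin n) ℝ) (b : Fin n → ℝ)
    (hQ : Q.PosSemidef) (hS : S.PosSemidef)
    (f : (Fin n → ℝ) → ℝ)
    (hf : ∀ x, f x = (1 / 2) * (x ⬝ᵥ Q *ᵥ x) - b ⬝ᵥ x)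
    (xstar : Fin n → ℝ)
    (x y : ℕ → (Fin n → ℝ)) (α : ℕ → ℝ)
    (hα0 : α 0 = 0) (hα1 : α 1 = 1)
    (hαrec : ∀ t, 1 ≤ t → α (t + 1) = (1 + Real.sqrt (1 + 4 * (α t) ^ 2)) / 2)
    (hx0 : x 0 = y 1)
    (hopt : ∀ t, 1 ≤ t → Q *ᵥ x t - b + S *ᵥ (x t - y t) = 0)
    (hy : ∀ t, 1 ≤ t →
      y (t + 1) = (1 + (α t - 1) / α (t + 1)) • x t - ((α t - 1) / α (t + 1)) • x (t - 1))
    (w : ℕ → (Fin n → ℝ))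
    (hw : ∀ t, w t = α t • x t - (α t - 1) • x (t - 1) - xstar) :
    ∀ t, 1 ≤ t →
      (α t) ^ 2 * (f (x t) - f xstar) + (1 / 2) * (w t ⬝ᵥ S *ᵥ w t)
        ≤ (α (t - 1)) ^ 2 * (f (x (t - 1)) - f xstar)
          + (1 / 2) * (w (t - 1) ⬝ᵥ S *ᵥ w (t - 1)) := by
  intro t ht
  obtain ⟨hαt, hαsq⟩ := nesterov_weight_one_le_and_mul_sub_one hα0 hα1 hαrec ht
  have hgrad : Q *ᵥ x t - b = S *ᵥ (y t - x t) := by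
    have hopt_t := hopt t ht
    rw [mulVec_sub] at hopt_t ⊢
    linear_combination hopt_t
  have hdescent : ∀ z, f (x t) + S *ᵥ (y t - x t) ⬝ᵥ (z - x t) ≤ f z := by
    intro z
    rw [hf, hf, ← hgrad]
    exact hQ.quadratic_add_gradient_le b (x t) z
  rw [← hαsq, nesterov_w_pred_eq hα0 hα1 hx0 hy hw ht (by linarith)]
  exact nesterov_lyapunov_step hS hdescent hαt (x (t - 1)) xstar (w t) (hw t)

theorem nesterov_recursive_descent {n : ℕ}
    (Q S : Matrix (Fin n) (Fin n) ℝ) (b : Fin n → ℝ)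
    (hQ : Q.PosSemidef) (hS : S.PosSemidef) (hb : ∃ z, Q *ᵥ z = b)
    (f : (Fin n → ℝ) → ℝ)
    (hf : ∀ x, f x = (1 / 2) * (x ⬝ᵥ Q *ᵥ x) - b ⬝ᵥ x)
    (xstar : Fin n → ℝ) (hxstar : Q *ᵥ xstar = b)
    (x y : ℕ → (Fin n → ℝ)) (α : ℕ → ℝ)
    (hα0 : α 0 = 0) (hα1 : α 1 = 1)
    (hαrec : ∀ t, 1 ≤ t → α (t + 1) = (1 + Real.sqrt (1 + 4 * (α t) ^ 2)) / 2)
    (hx0 : x 0 = y 1)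
    (hopt : ∀ t, 1 ≤ t → Q *ᵥ x t - b + S *ᵥ (x t - y t) = 0)
    (hy : ∀ t, 1 ≤ t →
      y (t + 1) = (1 + (α t - 1) / α (t + 1)) • x t - ((α t - 1) / α (t + 1)) • x (t - 1))
    (w : ℕ → (Fin n → ℝ))
    (hw : ∀ t, w t = α t • x t - (α t - 1) • x (t - 1) - xstar) :
    ∀ t, 1 ≤ t →
      (α t) ^ 2 * (f (x t) - f xstar) + (1 / 2) * (w t ⬝ᵥ S *ᵥ w t)
        ≤ (α (t - 1)) ^ 2 * (f (x (t - 1)) - f xstar)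
          + (1 / 2) * (w (t - 1) ⬝ᵥ S *ᵥ w (t - 1)) :=
  nesterov_recursive_descent_general Q S b hQ hS f hf xstar x y α hα0 hα1 hαrec hx0 hopt hy w hw
end

section
/- Under the setting of the Nesterov accelerated iteration (xᵗ minimizing f(x) + ½‖x − yᵗ‖²_S, with α₀ = 0, α₁ = 1, α_{t+1} = (1+√(1+4α_t²))/2 and the momentum update for y^{t+1}), for all t ≥ 1: 0 ≤ f(xᵗ) − f* ≤ 2‖x⁰ − x*‖²_S/(t+1)². -/
/-!
Each `xᵗ` is a proximal step: since `∇f(xᵗ) = S(yᵗ - xᵗ)` and `f` is a convex quadratic,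
`f(xᵗ) - f(z) ≤ ½‖z - yᵗ‖²_S - ½‖z - xᵗ‖²_S` for every `z`. Adding this inequality at
`z = xᵗ⁻¹` and at `z = x*`, with weights `αₜ(αₜ - 1)` and `αₜ`, and using `αₜ² - αₜ = αₜ₋₁²`
together with the momentum rule, shows that the energy `αₜ²(f(xᵗ) - f*) + ½‖wᵗ‖²_S`,
`wᵗ = αₜxᵗ - (αₜ - 1)xᵗ⁻¹ - x*`, is nonincreasing. It starts at `½‖x⁰ - x*‖²_S`, and
`αₜ ≥ (t + 1)/2`.
-/

open Matrix

section QuadraticForms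

variable {m R : Type*}

lemma Matrix.PosSemidef.isSymm [Ring R] [PartialOrder R] [StarRing R] [TrivialStar R]
    {S : Matrix m m R} (hS : S.PosSemidef) : S.IsSymm :=
  isHermitian_iff_isSymm.mp hS.isHermitian

variable [Fintype m]

lemma Matrix.PosSemidef.dotProduct_mulVec_self_nonneg [Ring R] [PartialOrder R] [StarRing R]
    [TrivialStar R] {S : Matrix m m R} (hS : S.PosSemidef) (v : m → R) :
    0 ≤ v ⬝ᵥ S *ᵥ v := by
  simpa using hS.dotProduct_mulVec_nonneg v

variable [CommRing R] {S : Matrix m m R}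

lemma Matrix.IsSymm.dotProduct_mulVec_comm_s6 (hS : S.IsSymm) (u v : m → R) :
    u ⬝ᵥ S *ᵥ v = v ⬝ᵥ S *ᵥ u := by
  simpa only [hS.eq] using dotProduct_transpose_mulVec S u v

lemma three_point_identity (hS : S.IsSymm) (x y z : m → R) :
    2 * ((S *ᵥ (y - x)) ⬝ᵥ (z - x)) =
      (z - x) ⬝ᵥ S *ᵥ (z - x) + (x - y) ⬝ᵥ S *ᵥ (x - y) - (z - y) ⬝ᵥ S *ᵥ (z - y) := by
  rw [dotProduct_comm]
  simp only [mulVec_sub, dotProduct_sub, sub_dotProduct]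
  rw [hS.dotProduct_mulVec_comm_s6 x z, hS.dotProduct_mulVec_comm_s6 y z,
    hS.dotProduct_mulVec_comm_s6 y x]
  ring

lemma affine_combination_identity (hS : S.IsSymm) (a : R) (p z u : m → R) :
    a * ((a - 1) * ((p - u) ⬝ᵥ S *ᵥ (p - u)) + (z - u) ⬝ᵥ S *ᵥ (z - u)) =
      (a • u - (a - 1) • p - z) ⬝ᵥ S *ᵥ (a • u - (a - 1) • p - z)
        + (a - 1) * ((p - z) ⬝ᵥ S *ᵥ (p - z)) := by
  simp only [mulVec_sub, mulVec_smul, dotProduct_sub, sub_dotProduct, dotProduct_smul,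
    smul_dotProduct, smul_eq_mul]
  rw [hS.dotProduct_mulVec_comm_s6 u p, hS.dotProduct_mulVec_comm_s6 u z,
    hS.dotProduct_mulVec_comm_s6 z p]
  ring

end QuadraticForms

section ProximalStep

variable {m : Type*} [Fintype m] {Q S : Matrix m m ℝ} {b : m → ℝ} {f : (m → ℝ) → ℝ}

lemma quadratic_eq_taylor (hQ : Q.IsSymm) (hf : ∀ x, f x = (1 / 2) * (x ⬝ᵥ Q *ᵥ x) - b ⬝ᵥ x)
    (u v : m → ℝ) :
    f v = f u + (Q *ᵥ u - b) ⬝ᵥ (v - u) + (1 / 2) * ((v - u) ⬝ᵥ Q *ᵥ (v - u)) := by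
  simp only [hf, mulVec_sub, dotProduct_sub, sub_dotProduct]
  rw [dotProduct_comm (Q *ᵥ u) v, dotProduct_comm (Q *ᵥ u) u, hQ.dotProduct_mulVec_comm_s6 u v]
  ring

lemma prox_step_le (hQ : Q.PosSemidef) (hS : S.PosSemidef)
    (hf : ∀ x, f x = (1 / 2) * (x ⬝ᵥ Q *ᵥ x) - b ⬝ᵥ x) {x y : m → ℝ}
    (hopt : Q *ᵥ x - b + S *ᵥ (x - y) = 0) (z : m → ℝ) :
    f x - f z ≤ (1 / 2) * ((z - y) ⬝ᵥ S *ᵥ (z - y)) - (1 / 2) * ((z - x) ⬝ᵥ S *ᵥ (z - x)) := by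
  have hgrad : Q *ᵥ x - b = S *ᵥ (y - x) := by
    rw [← neg_sub x y, mulVec_neg]; linear_combination hopt
  have htaylor := quadratic_eq_taylor hQ.isSymm hf x z
  have hthree := three_point_identity hS.isSymm x y z
  rw [hgrad] at htaylor
  nlinarith [hQ.dotProduct_mulVec_self_nonneg (z - x), hS.dotProduct_mulVec_self_nonneg (x - y)]

lemma accelerated_step_le (hQ : Q.PosSemidef) (hS : S.PosSemidef)
    (hf : ∀ x, f x = (1 / 2) * (x ⬝ᵥ Q *ᵥ x) - b ⬝ᵥ x) {x y : m → ℝ}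
    (hopt : Q *ᵥ x - b + S *ᵥ (x - y) = 0) {a : ℝ} (ha : 1 ≤ a) (p z : m → ℝ) :
    a ^ 2 * (f x - f z) + (1 / 2) * ((a • x - (a - 1) • p - z) ⬝ᵥ S *ᵥ (a • x - (a - 1) • p - z))
      ≤ (a ^ 2 - a) * (f p - f z)
        + (1 / 2) * ((a • y - (a - 1) • p - z) ⬝ᵥ S *ᵥ (a • y - (a - 1) • p - z)) := by
  have hp := mul_le_mul_of_nonneg_left (prox_step_le hQ hS hf hopt p)
    (by nlinarith : 0 ≤ a * (a - 1))
  have hz := mul_le_mul_of_nonneg_left (prox_step_le hQ hS hf hopt z) (by linarith : 0 ≤ a)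
  have hx := affine_combination_identity hS.isSymm a p z x
  have hy := affine_combination_identity hS.isSymm a p z y
  nlinarith

end ProximalStep

section Energy

variable {m : Type*} [Fintype m]

/-- The paper's `wᵗ`. At `t = 0` the truncated `t - 1` makes it `x 0 - z` whenever `α 0 = 0`. -/
def nesterovW (α : ℕ → ℝ) (x : ℕ → m → ℝ) (z : m → ℝ) (t : ℕ) : m → ℝ :=
  α t • x t - (α t - 1) • x (t - 1) - z

noncomputable def nesterovEnergy (f : (m → ℝ) → ℝ) (S : Matrix m m ℝ) (α : ℕ → ℝ) (x : ℕ → m → ℝ)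
    (z : m → ℝ) (t : ℕ) : ℝ :=
  α t ^ 2 * (f (x t) - f z) + (1 / 2) * (nesterovW α x z t ⬝ᵥ S *ᵥ nesterovW α x z t)

lemma nesterovEnergy_antitone {Q S : Matrix m m ℝ} {b : m → ℝ} {f : (m → ℝ) → ℝ}
    (hQ : Q.PosSemidef) (hS : S.PosSemidef)
    (hf : ∀ x, f x = (1 / 2) * (x ⬝ᵥ Q *ᵥ x) - b ⬝ᵥ x) {x y : ℕ → m → ℝ} {α : ℕ → ℝ}
    (hopt : ∀ t, Q *ᵥ x (t + 1) - b + S *ᵥ (x (t + 1) - y (t + 1)) = 0)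
    (hα : ∀ t, 1 ≤ α (t + 1)) (hαsq : ∀ t, α (t + 1) ^ 2 - α (t + 1) = α t ^ 2)
    (hmom : ∀ t, α (t + 1) • y (t + 1) - (α (t + 1) - 1) • x t =
      α t • x t - (α t - 1) • x (t - 1))
    (z : m → ℝ) : Antitone (nesterovEnergy f S α x z) :=
  antitone_nat_of_succ_le fun t => by
    have h := accelerated_step_le hQ hS hf (hopt t) (hα t) (x t) z
    rwa [hmom, hαsq] at h

end Energy

lemma nesterov_step_sq_sub_self (a : ℝ) :
    ((1 + √(1 + 4 * a ^ 2)) / 2) ^ 2 - (1 + √(1 + 4 * a ^ 2)) / 2 = a ^ 2 := by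
  have := Real.sq_sqrt (by positivity : (0 : ℝ) ≤ 1 + 4 * a ^ 2)
  linear_combination this / 4

lemma add_half_le_nesterov_step (a : ℝ) : a + 1 / 2 ≤ (1 + √(1 + 4 * a ^ 2)) / 2 := by
  have : 2 * a ≤ √(1 + 4 * a ^ 2) := Real.le_sqrt_of_sq_le (by nlinarith)
  linarith

lemma half_succ_le_of_nesterov_rec {α : ℕ → ℝ} (hα1 : α 1 = 1)
    (hrec : ∀ t, 1 ≤ t → α (t + 1) = (1 + √(1 + 4 * α t ^ 2)) / 2) :
    ∀ t : ℕ, 1 ≤ t → ((t : ℝ) + 1) / 2 ≤ α t := by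
  intro t ht
  induction t, ht using Nat.le_induction with
  | base => norm_num [hα1]
  | succ t ht ih =>
    rw [hrec t ht]
    push_cast
    linarith [add_half_le_nesterov_step (α t)]

lemma momentum_identity {E : Type*} [AddCommGroup E] [Module ℝ E] {a a' : ℝ} (ha' : a' ≠ 0)
    (u v : E) :
    a' • ((1 + (a - 1) / a') • u - ((a - 1) / a') • v) - (a' - 1) • u = a • u - (a - 1) • v := by
  rw [smul_sub, smul_smul, smul_smul, mul_add, mul_div_cancel₀ _ ha']
  module

theorem nesterov_convergence_rate_general {n : ℕ}
    (Q S : Matrix (Fin n) (Fin n) ℝ) (b : Fin n → ℝ)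
    (hQ : Q.PosSemidef) (hS : S.PosSemidef)
    (f : (Fin n → ℝ) → ℝ)
    (hf : ∀ x, f x = (1 / 2) * (x ⬝ᵥ Q *ᵥ x) - b ⬝ᵥ x)
    (xstar : Fin n → ℝ) (hmin : ∀ z, f xstar ≤ f z)
    (x y : ℕ → (Fin n → ℝ)) (α : ℕ → ℝ)
    (hα0 : α 0 = 0) (hα1 : α 1 = 1)
    (hαrec : ∀ t, 1 ≤ t → α (t + 1) = (1 + Real.sqrt (1 + 4 * (α t) ^ 2)) / 2)
    (hx0 : x 0 = y 1)
    (hopt : ∀ t, 1 ≤ t → Q *ᵥ x t - b + S *ᵥ (x t - y t) = 0)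
    (hy : ∀ t, 1 ≤ t →
      y (t + 1) = (1 + (α t - 1) / α (t + 1)) • x t - ((α t - 1) / α (t + 1)) • x (t - 1)) :
    ∀ t, 1 ≤ t →
      0 ≤ f (x t) - f xstar ∧
      f (x t) - f xstar ≤ 2 * ((x 0 - xstar) ⬝ᵥ S *ᵥ (x 0 - xstar)) / ((t : ℝ) + 1) ^ 2 := by
  have hrec : ∀ t, α (t + 1) = (1 + √(1 + 4 * α t ^ 2)) / 2 := by
    rintro (_ | t)
    · norm_num [hα0, hα1]
    · exact hαrec _ t.succ_pos
  have hαge := half_succ_le_of_nesterov_rec hα1 hαrec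
  have hα_one : ∀ t, 1 ≤ α (t + 1) := fun t => by
    have := hαge (t + 1) t.succ_pos
    push_cast at this
    linarith [t.cast_nonneg (α := ℝ)]
  have hmom : ∀ t, α (t + 1) • y (t + 1) - (α (t + 1) - 1) • x t =
      α t • x t - (α t - 1) • x (t - 1) := by
    rintro (_ | t)
    · simp [hα0, hα1, hx0]
    · rw [hy (t + 1) t.succ_pos, momentum_identity (by linarith [hα_one (t + 1)])]
  have hE := nesterovEnergy_antitone hQ hS hf (fun t => hopt (t + 1) t.succ_pos) hα_one
    (fun t => by rw [hrec t]; exact nesterov_step_sq_sub_self _) hmom xstar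
  intro t ht
  have hgap : 0 ≤ f (x t) - f xstar := sub_nonneg.mpr (hmin _)
  refine ⟨hgap, ?_⟩
  have hEt : nesterovEnergy f S α x xstar t ≤ (1 / 2) * ((x 0 - xstar) ⬝ᵥ S *ᵥ (x 0 - xstar)) := by
    simpa [nesterovEnergy, nesterovW, hα0] using hE (Nat.zero_le t)
  have hw := hS.dotProduct_mulVec_self_nonneg (nesterovW α x xstar t)
  have hαt : ((t : ℝ) + 1) ^ 2 ≤ 4 * α t ^ 2 := by
    linarith [pow_le_pow_left₀ (by positivity) (hαge t ht) 2]
  rw [nesterovEnergy] at hEt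
  rw [le_div_iff₀ (by positivity)]
  nlinarith [mul_le_mul_of_nonneg_left hαt hgap]

theorem nesterov_convergence_rate {n : ℕ}
    (Q S : Matrix (Fin n) (Fin n) ℝ) (b : Fin n → ℝ)
    (hQ : Q.PosSemidef) (hS : S.PosSemidef) (hb : ∃ z, Q *ᵥ z = b)
    (f : (Fin n → ℝ) → ℝ)
    (hf : ∀ x, f x = (1 / 2) * (x ⬝ᵥ Q *ᵥ x) - b ⬝ᵥ x)
    (xstar : Fin n → ℝ) (hmin : ∀ z, f xstar ≤ f z)
    (x y : ℕ → (Fin n → ℝ)) (α : ℕ → ℝ)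
    (hα0 : α 0 = 0) (hα1 : α 1 = 1)
    (hαrec : ∀ t, 1 ≤ t → α (t + 1) = (1 + Real.sqrt (1 + 4 * (α t) ^ 2)) / 2)
    (hx0 : x 0 = y 1)
    (hopt : ∀ t, 1 ≤ t → Q *ᵥ x t - b + S *ᵥ (x t - y t) = 0)
    (hy : ∀ t, 1 ≤ t →
      y (t + 1) = (1 + (α t - 1) / α (t + 1)) • x t - ((α t - 1) / α (t + 1)) • x (t - 1)) :
    ∀ t, 1 ≤ t →
      0 ≤ f (x t) - f xstar ∧
      f (x t) - f xstar ≤ 2 * ((x 0 - xstar) ⬝ᵥ S *ᵥ (x 0 - xstar)) / ((t : ℝ) + 1) ^ 2 :=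
  nesterov_convergence_rate_general Q S b hQ hS f hf xstar hmin x y α hα0 hα1 hαrec hx0 hopt hy
end

section
/- Let Q be symmetric positive semidefinite partitioned into s×s blocks Q^{i,j}, and define the block-diagonal matrix J with blocks J^{i,i} = Q^{i,i} + (Σ_{j≠i}‖Q^{i,j}‖₂)·I. Then S := J − Q is symmetric positive semidefinite. -/
/-!
Write `x = (xᵢ)` blockwise. A symmetric matrix `S` whose diagonal blocks are scalar, `Sᵢᵢ = cᵢ • 1`,
has `xᵀ S x = ∑ᵢ cᵢ ‖xᵢ‖² + ∑_{i ≠ j} xᵢᵀ Sᵢⱼ xⱼ`, and each cross term is at least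
`-‖Sᵢⱼ‖ ‖xᵢ‖ ‖xⱼ‖ ≥ -‖Sᵢⱼ‖ (‖xᵢ‖² + ‖xⱼ‖²) / 2`. As `‖Sᵢⱼ‖ = ‖Sⱼᵢ‖`, these lower bounds add up to
`-∑ᵢ (∑_{j ≠ i} ‖Sᵢⱼ‖) ‖xᵢ‖²`, so `S` is positive semidefinite as soon as `cᵢ ≥ ∑_{j ≠ i} ‖Sᵢⱼ‖`.
For `S = J - Q` the diagonal blocks are `cᵢ • 1` with equality here, and `Sᵢⱼ = -Qᵢⱼ` off the diagonal.
-/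

open Matrix

/-- The spectral norm (`‖·‖₂`, largest singular value) of a real rectangular matrix,
as the operator norm of the induced map between Euclidean spaces. -/
noncomputable def specNorm {p q : Type*} [Fintype p] [Fintype q] [DecidableEq q]
    (A : Matrix p q ℝ) : ℝ :=
  ‖LinearMap.toContinuousLinearMap (Matrix.toEuclideanLin A)‖

open Finset
open scoped Matrix.Norms.L2Operator

section SpecNorm

variable {p q : Type*} [Fintype p] [Fintype q] [DecidableEq q]

theorem specNorm_nonneg (A : Matrix p q ℝ) : 0 ≤ specNorm A := norm_nonneg _

theorem specNorm_neg (A : Matrix p q ℝ) : specNorm (-A) = specNorm A := norm_neg A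

theorem specNorm_conjTranspose [DecidableEq p] (A : Matrix p q ℝ) :
    specNorm Aᴴ = specNorm A :=
  l2_opNorm_conjTranspose A

theorem abs_dotProduct_mulVec_le_specNorm (A : Matrix p q ℝ) (x : p → ℝ) (y : q → ℝ) :
    |x ⬝ᵥ A *ᵥ y| ≤ specNorm A *
      (‖(WithLp.toLp 2 x : EuclideanSpace ℝ p)‖ * ‖(WithLp.toLp 2 y : EuclideanSpace ℝ q)‖) := by
  have h_inner : x ⬝ᵥ A *ᵥ y =
      inner ℝ (WithLp.toLp 2 x : EuclideanSpace ℝ p) (WithLp.toLp 2 (A *ᵥ y)) := by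
    rw [EuclideanSpace.inner_eq_star_dotProduct, dotProduct_comm]
    rfl
  calc |x ⬝ᵥ A *ᵥ y|
      ≤ ‖(WithLp.toLp 2 x : EuclideanSpace ℝ p)‖ *
          ‖(WithLp.toLp 2 (A *ᵥ y) : EuclideanSpace ℝ p)‖ :=
        h_inner ▸ abs_real_inner_le_norm _ _
    _ ≤ ‖(WithLp.toLp 2 x : EuclideanSpace ℝ p)‖ *
          (specNorm A * ‖(WithLp.toLp 2 y : EuclideanSpace ℝ q)‖) :=
        mul_le_mul_of_nonneg_left (l2_opNorm_mulVec A (WithLp.toLp 2 y)) (norm_nonneg _)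
    _ = _ := by ring

end SpecNorm

theorem dotProduct_mulVec_sigma {R ι : Type*} {κ : ι → Type*} [NonUnitalNonAssocSemiring R] [Fintype ι]
    [∀ i, Fintype (κ i)] (A : Matrix (Σ i, κ i) (Σ i, κ i) R) (x y : (Σ i, κ i) → R) :
    x ⬝ᵥ A *ᵥ y = ∑ i, ∑ j,
      (x ∘ Sigma.mk i) ⬝ᵥ A.submatrix (Sigma.mk i) (Sigma.mk j) *ᵥ (y ∘ Sigma.mk j) := by
  simp only [dotProduct, mulVec, Fintype.sum_sigma, Finset.mul_sum, submatrix_apply,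
    Function.comp]
  exact Finset.sum_congr rfl fun i _ => Finset.sum_comm

theorem sum_sum_erase_mul_mul_le {ι : Type*} [Fintype ι] [DecidableEq ι] (w : ι → ι → ℝ)
    (hw : ∀ i j, 0 ≤ w i j) (hw_symm : ∀ i j, w i j = w j i) (u : ι → ℝ) :
    ∑ i, ∑ j ∈ univ.erase i, w i j * (u i * u j) ≤ ∑ i, ∑ j ∈ univ.erase i, w i j * u i ^ 2 := by
  have h_swap : ∑ i, ∑ j ∈ univ.erase i, w i j * u j ^ 2 =
      ∑ i, ∑ j ∈ univ.erase i, w i j * u i ^ 2 := by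
    rw [Finset.sum_comm' (t' := univ) (s' := fun j => univ.erase j) (by simp [ne_comm])]
    simp only [hw_symm]
  have h_amgm : ∀ i j, 2 * (w i j * (u i * u j)) ≤ w i j * u i ^ 2 + w i j * u j ^ 2 :=
    fun i j => by nlinarith [mul_nonneg (hw i j) (sq_nonneg (u i - u j))]
  have h_sum := Finset.sum_le_sum fun i (_ : i ∈ univ) =>
    Finset.sum_le_sum fun j (_ : j ∈ univ.erase i) => h_amgm i j
  simp only [← Finset.mul_sum, Finset.sum_add_distrib, h_swap] at h_sum
  linarith

theorem posSemidef_of_sum_specNorm_offDiag_blocks_le {ι : Type*} {κ : ι → Type*} [Fintype ι]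
    [DecidableEq ι] [∀ i, Fintype (κ i)] [∀ i, DecidableEq (κ i)]
    (S : Matrix (Σ i, κ i) (Σ i, κ i) ℝ) (hS : S.IsHermitian) (c : ι → ℝ)
    (h_diag : ∀ i, S.submatrix (Sigma.mk i) (Sigma.mk i) = c i • 1)
    (h_offDiag : ∀ i,
      ∑ j ∈ univ.erase i, specNorm (S.submatrix (Sigma.mk i) (Sigma.mk j)) ≤ c i) :
    S.PosSemidef := by
  refine .of_dotProduct_mulVec_nonneg hS fun x => ?_
  set w : ι → ι → ℝ := fun i j => specNorm (S.submatrix (Sigma.mk i) (Sigma.mk j))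
  set u : ι → ℝ := fun i => ‖(WithLp.toLp 2 (x ∘ Sigma.mk i) : EuclideanSpace ℝ (κ i))‖
  have hw_symm : ∀ i j, w i j = w j i := fun i j => by
    simp only [w]
    rw [← specNorm_conjTranspose, conjTranspose_submatrix, hS.eq]
  have h_diag_term : ∀ i, (x ∘ Sigma.mk i) ⬝ᵥ
      S.submatrix (Sigma.mk i) (Sigma.mk i) *ᵥ (x ∘ Sigma.mk i) = c i * u i ^ 2 := fun i => by
    rw [h_diag, smul_mulVec, one_mulVec, dotProduct_smul, smul_eq_mul,
      ← real_inner_self_eq_norm_sq, EuclideanSpace.inner_eq_star_dotProduct, star_trivial]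
  have h_offDiag_term : ∀ i j, -(w i j * (u i * u j)) ≤
      (x ∘ Sigma.mk i) ⬝ᵥ S.submatrix (Sigma.mk i) (Sigma.mk j) *ᵥ (x ∘ Sigma.mk j) :=
    fun i j => neg_le_of_abs_le (abs_dotProduct_mulVec_le_specNorm _ _ _)
  calc (0 : ℝ)
      ≤ ∑ i, ∑ j ∈ univ.erase i, w i j * u i ^ 2 -
          ∑ i, ∑ j ∈ univ.erase i, w i j * (u i * u j) :=
        sub_nonneg.2 (sum_sum_erase_mul_mul_le w (fun _ _ => specNorm_nonneg _) hw_symm u)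
    _ ≤ ∑ i, (c i * u i ^ 2 - ∑ j ∈ univ.erase i, w i j * (u i * u j)) := by
        rw [← Finset.sum_sub_distrib]
        gcongr with i
        rw [← Finset.sum_mul]
        exact mul_le_mul_of_nonneg_right (h_offDiag i) (sq_nonneg _)
    _ ≤ ∑ i, ∑ j,
          (x ∘ Sigma.mk i) ⬝ᵥ S.submatrix (Sigma.mk i) (Sigma.mk j) *ᵥ (x ∘ Sigma.mk j) := by
        gcongr with i
        rw [← Finset.add_sum_erase _ _ (mem_univ i), h_diag_term, sub_eq_add_neg,
          ← Finset.sum_neg_distrib]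
        gcongr with j
        exact h_offDiag_term i j
    _ = star x ⬝ᵥ S *ᵥ x := (dotProduct_mulVec_sigma S x x).symm

theorem block_diag_proximal_psd {s : ℕ} (m : Fin s → ℕ)
    (Q : Matrix ((i : Fin s) × Fin (m i)) ((i : Fin s) × Fin (m i)) ℝ)
    (hQ : Q.PosSemidef)
    (J : Matrix ((i : Fin s) × Fin (m i)) ((i : Fin s) × Fin (m i)) ℝ)
    (hJ : ∀ p q, J p q =
      (if p.1 = q.1 then Q p q else 0) +
      (if p = q then
        ∑ j ∈ Finset.univ.erase p.1,
          specNorm (Q.submatrix (Sigma.mk p.1) (Sigma.mk j))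
       else 0)) :
    (J - Q).PosSemidef := by
  have hJ_herm : J.IsHermitian := by
    ext p q
    rw [conjTranspose_apply, star_trivial, hJ, hJ, ← hQ.1.apply, star_trivial]
    rcases eq_or_ne p q with rfl | hpq
    · rfl
    · simp [hpq, hpq.symm, eq_comm]
  refine posSemidef_of_sum_specNorm_offDiag_blocks_le (J - Q) (hJ_herm.sub hQ.1)
    (fun i => ∑ j ∈ univ.erase i, specNorm (Q.submatrix (Sigma.mk i) (Sigma.mk j)))
    (fun i => ?_) (fun i => (Finset.sum_congr rfl fun j hj => ?_).le)
  · ext a b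
    simp [hJ, one_apply]
  · have h_block : (J - Q).submatrix (Sigma.mk i) (Sigma.mk j) =
        -Q.submatrix (Sigma.mk i) (Sigma.mk j) := by
      ext a b
      simp [hJ, (ne_of_mem_erase hj).symm]
    rw [h_block, specNorm_neg]
end

section
/- Let Q ∈ 𝕊₊ⁿ, b ∈ range(Q), S ∈ 𝕊₊ⁿ, and suppose yᵗ, x^{t−1}, xᵗ, x^{t+1} satisfy the Nesterov updates with exact subproblem solves. Then f(x^{t+1}) − f(xᵗ) ≤ ½((α_t−1)/α_{t+1})²⟨xᵗ − x^{t−1}, S(xᵗ − x^{t−1})⟩ − ½⟨x^{t+1} − xᵗ, S(x^{t+1} − xᵗ)⟩. -/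
/-!
The optimality condition `Q x⁺ - b = -S (x⁺ - y)` and the exact second-order expansion of `f`
at `x⁺` give `f x - f x⁺ ≥ ½‖x⁺ - y‖²_S + ⟨y - x, S (x⁺ - y)⟩` for every `x`, the `Q`-curvature
term being nonnegative. At `x = xᵗ` we have `y - xᵗ = c (xᵗ - x^{t-1})` with
`c = (α_t - 1)/α_{t+1}`, and completing the square in `S` turns the right-hand side into
`½‖x⁺ - xᵗ‖²_S - ½c²‖xᵗ - x^{t-1}‖²_S`.
-/

open Matrix

variable {ι R : Type*} [Fintype ι]

theorem Matrix.IsSymm.dotProduct_mulVec_comm_s18 [CommSemiring R] {M : Matrix ι ι R}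
    (hM : M.IsSymm) (x y : ι → R) : x ⬝ᵥ M *ᵥ y = y ⬝ᵥ M *ᵥ x := by
  rw [dotProduct_mulVec, ← mulVec_transpose, hM.eq, dotProduct_comm]

theorem Matrix.IsSymm.dotProduct_mulVec_add_self [CommSemiring R]
    {M : Matrix ι ι R} (hM : M.IsSymm) (x y : ι → R) :
    (x + y) ⬝ᵥ M *ᵥ (x + y) = x ⬝ᵥ M *ᵥ x + 2 * (x ⬝ᵥ M *ᵥ y) + y ⬝ᵥ M *ᵥ y := by
  simp only [mulVec_add, dotProduct_add, add_dotProduct, hM.dotProduct_mulVec_comm_s18 y x]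
  ring

theorem Matrix.dotProduct_mulVec_smul_self [CommSemiring R] (M : Matrix ι ι R) (c : R)
    (x : ι → R) : (c • x) ⬝ᵥ M *ᵥ (c • x) = c ^ 2 * (x ⬝ᵥ M *ᵥ x) := by
  rw [mulVec_smul, dotProduct_smul, smul_dotProduct, smul_eq_mul, smul_eq_mul]
  ring

def quadraticObjective [Field R] (Q : Matrix ι ι R) (b x : ι → R) : R :=
  (1 / 2) * (x ⬝ᵥ Q *ᵥ x) - b ⬝ᵥ x

theorem quadraticObjective_sub [Field R] [NeZero (2 : R)] {Q : Matrix ι ι R} (hQ : Q.IsSymm)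
    (b x z : ι → R) :
    quadraticObjective Q b x - quadraticObjective Q b z
      = (x - z) ⬝ᵥ (Q *ᵥ z - b) + (1 / 2) * ((x - z) ⬝ᵥ Q *ᵥ (x - z)) := by
  have hx : x = (x - z) + z := (sub_add_cancel x z).symm
  conv_lhs => rw [hx]
  simp only [quadraticObjective, hQ.dotProduct_mulVec_add_self, dotProduct_sub,
    add_dotProduct, dotProduct_comm b]
  field_simp
  ring

theorem quadraticObjective_sub_ge_of_proximal_optimality {Q S : Matrix ι ι ℝ}
    {b y xplus : ι → ℝ}
    (hQ : Q.PosSemidef) (hS : S.PosSemidef) (hopt : Q *ᵥ xplus - b + S *ᵥ (xplus - y) = 0)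
    (x : ι → ℝ) :
    (1 / 2) * ((xplus - y) ⬝ᵥ S *ᵥ (xplus - y)) + (y - x) ⬝ᵥ S *ᵥ (xplus - y)
      ≤ quadraticObjective Q b x - quadraticObjective Q b xplus := by
  have hgrad : Q *ᵥ xplus - b = -(S *ᵥ (xplus - y)) := eq_neg_of_add_eq_zero_left hopt
  have hQ_nonneg : 0 ≤ (x - xplus) ⬝ᵥ Q *ᵥ (x - xplus) := by
    simpa using hQ.dotProduct_mulVec_nonneg (x - xplus)
  have hS_nonneg : 0 ≤ (xplus - y) ⬝ᵥ S *ᵥ (xplus - y) := by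
    simpa using hS.dotProduct_mulVec_nonneg (xplus - y)
  have hsplit : (xplus - x) ⬝ᵥ S *ᵥ (xplus - y)
      = (xplus - y) ⬝ᵥ S *ᵥ (xplus - y) + (y - x) ⬝ᵥ S *ᵥ (xplus - y) := by
    rw [← add_dotProduct, sub_add_sub_cancel]
  rw [quadraticObjective_sub (isHermitian_iff_isSymm.mp hQ.isHermitian), hgrad, dotProduct_neg,
    ← neg_dotProduct, neg_sub, hsplit]
  linarith

theorem nesterov_step_descent_inequality_general {n : ℕ}
    (Q S : Matrix (Fin n) (Fin n) ℝ) (b : Fin n → ℝ)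
    (hQ : Q.PosSemidef) (hS : S.PosSemidef)
    (f : (Fin n → ℝ) → ℝ)
    (hf : ∀ x, f x = (1 / 2) * (x ⬝ᵥ Q *ᵥ x) - b ⬝ᵥ x)
    (α αnext : ℝ)
    (xprev xt xnext ynext : Fin n → ℝ)
    (hy : ynext = xt + ((α - 1) / αnext) • (xt - xprev))
    (hopt : Q *ᵥ xnext - b + S *ᵥ (xnext - ynext) = 0) :
    f xnext - f xt
      ≤ (1 / 2) * ((α - 1) / αnext) ^ 2 * ((xt - xprev) ⬝ᵥ S *ᵥ (xt - xprev))
        - (1 / 2) * ((xnext - xt) ⬝ᵥ S *ᵥ (xnext - xt)) := by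
  obtain rfl : f = quadraticObjective Q b := funext hf
  have hdescent := quadraticObjective_sub_ge_of_proximal_optimality hQ hS hopt xt
  have hmomentum : ynext - xt = ((α - 1) / αnext) • (xt - xprev) := by
    rw [hy, add_sub_cancel_left]
  have hsquare := (isHermitian_iff_isSymm.mp hS.isHermitian).dotProduct_mulVec_add_self
    (ynext - xt) (xnext - ynext)
  rw [sub_add_sub_cancel', hmomentum, dotProduct_mulVec_smul_self] at hsquare
  rw [hmomentum] at hdescent
  linarith

theorem nesterov_step_descent_inequality {n : ℕ}
    (Q S : Matrix (Fin n) (Fin n) ℝ) (b : Fin n → ℝ)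
    (hQ : Q.PosSemidef) (hS : S.PosSemidef) (hb : ∃ z, Q *ᵥ z = b)
    (f : (Fin n → ℝ) → ℝ)
    (hf : ∀ x, f x = (1 / 2) * (x ⬝ᵥ Q *ᵥ x) - b ⬝ᵥ x)
    (α αnext : ℝ)
    (xprev xt xnext ynext : Fin n → ℝ)
    (hy : ynext = xt + ((α - 1) / αnext) • (xt - xprev))
    (hopt : Q *ᵥ xnext - b + S *ᵥ (xnext - ynext) = 0) :
    f xnext - f xt
      ≤ (1 / 2) * ((α - 1) / αnext) ^ 2 * ((xt - xprev) ⬝ᵥ S *ᵥ (xt - xprev))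
        - (1 / 2) * ((xnext - xt) ⬝ᵥ S *ᵥ (xnext - xt)) :=
  nesterov_step_descent_inequality_general Q S b hQ hS f hf α αnext xprev xt xnext ynext hy hopt
end
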